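/- An ordered hypersemigroup H is regular if and only if the right ideals and the left ideals of H are idempotent (i.e. (A*A] = A) and for every right ideal A and left ideal B of H, the set (A*B] is a quasi-ideal of H. -/
import Mathlib


variable {H : Type*}

/-- Subset product induced by a hyperoperation. -/
def hprod (m : H → H → Set H) (A B : Set H) : Set H :=
  ⋃ a ∈ A, ⋃ b ∈ B, m a b

/-- Downward closure (X]. -/
def dcl [LE H] (X : Set H) : Set H := {t | ∃ x ∈ X, t ≤ x}

/-- Right ideal of an ordered hypergroupoid. -/
def IsRightIdeal [LE H] (m : H → H → Set H) (A : Set H) : Prop :=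
  A.Nonempty ∧ hprod m A Set.univ ⊆ A ∧ dcl A = A

/-- Left ideal of an ordered hypergroupoid. -/
def IsLeftIdeal [LE H] (m : H → H → Set H) (A : Set H) : Prop :=
  A.Nonempty ∧ hprod m Set.univ A ⊆ A ∧ dcl A = A

/-- (Two-sided) ideal of an ordered hypergroupoid. -/
def IsIdeal [LE H] (m : H → H → Set H) (A : Set H) : Prop :=
  A.Nonempty ∧ hprod m A Set.univ ⊆ A ∧ hprod m Set.univ A ⊆ A ∧ dcl A = A

/-- Quasi-ideal of an ordered hypersemigroup. -/
def IsQuasiIdeal [LE H] (m : H → H → Set H) (Q : Set H) : Prop :=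
  Q.Nonempty ∧ dcl (hprod m Q Set.univ) ∩ dcl (hprod m Set.univ Q) ⊆ Q ∧ dcl Q = Q

section Aux

variable {m : H → H → Set H}

lemma mem_hprod {A B : Set H} {t : H} :
    t ∈ hprod m A B ↔ ∃ a ∈ A, ∃ b ∈ B, t ∈ m a b := by
  simp [hprod]

lemma hprod_mono {A A' B B' : Set H} (hA : A ⊆ A') (hB : B ⊆ B') :
    hprod m A B ⊆ hprod m A' B' := by
  intro t ht
  rcases mem_hprod.1 ht with ⟨a, ha, b, hb, h⟩
  exact mem_hprod.2 ⟨a, hA ha, b, hB hb, h⟩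

lemma hprod_union_left (X Y Z : Set H) :
    hprod m (X ∪ Y) Z = hprod m X Z ∪ hprod m Y Z := by
  ext t
  simp only [mem_hprod, Set.mem_union]
  constructor
  · rintro ⟨a, ha | ha, b, hb, h⟩
    · exact Or.inl ⟨a, ha, b, hb, h⟩
    · exact Or.inr ⟨a, ha, b, hb, h⟩
  · rintro (⟨a, ha, b, hb, h⟩ | ⟨a, ha, b, hb, h⟩)
    · exact ⟨a, Or.inl ha, b, hb, h⟩
    · exact ⟨a, Or.inr ha, b, hb, h⟩

lemma hprod_union_right (X Y Z : Set H) :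
    hprod m X (Y ∪ Z) = hprod m X Y ∪ hprod m X Z := by
  ext t
  simp only [mem_hprod, Set.mem_union]
  constructor
  · rintro ⟨a, ha, b, hb | hb, h⟩
    · exact Or.inl ⟨a, ha, b, hb, h⟩
    · exact Or.inr ⟨a, ha, b, hb, h⟩
  · rintro (⟨a, ha, b, hb, h⟩ | ⟨a, ha, b, hb, h⟩)
    · exact ⟨a, ha, b, Or.inl hb, h⟩
    · exact ⟨a, ha, b, Or.inr hb, h⟩

lemma hprod_singleton (a b : H) : hprod m {a} {b} = m a b := by
  simp [hprod]

variable [PartialOrder H]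

lemma subset_dcl (X : Set H) : X ⊆ dcl X := fun x hx => ⟨x, hx, le_refl x⟩

lemma dcl_mono {X Y : Set H} (h : X ⊆ Y) : dcl X ⊆ dcl Y := by
  rintro t ⟨x, hx, hle⟩
  exact ⟨x, h hx, hle⟩

lemma dcl_dcl (X : Set H) : dcl (dcl X) = dcl X := by
  apply Set.Subset.antisymm
  · rintro t ⟨x, ⟨y, hy, hxy⟩, hle⟩
    exact ⟨y, hy, le_trans hle hxy⟩
  · exact subset_dcl _

lemma dcl_union (X Y : Set H) : dcl (X ∪ Y) = dcl X ∪ dcl Y := by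
  ext t
  constructor
  · rintro ⟨x, hx | hx, hle⟩
    · exact Or.inl ⟨x, hx, hle⟩
    · exact Or.inr ⟨x, hx, hle⟩
  · rintro (⟨x, hx, hle⟩ | ⟨x, hx, hle⟩)
    · exact ⟨x, Or.inl hx, hle⟩
    · exact ⟨x, Or.inr hx, hle⟩

lemma hprod_dcl_left
    (hcomp : ∀ a b c : H, a ≤ b → dcl (m a c) ⊆ dcl (m b c) ∧ dcl (m c a) ⊆ dcl (m c b))
    (X Y : Set H) : hprod m (dcl X) Y ⊆ dcl (hprod m X Y) := by
  intro t ht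
  rcases mem_hprod.1 ht with ⟨a, ⟨x, hx, hax⟩, b, hb, h⟩
  rcases (hcomp a x b hax).1 (subset_dcl _ h) with ⟨u, hu, htu⟩
  exact ⟨u, mem_hprod.2 ⟨x, hx, b, hb, hu⟩, htu⟩

lemma hprod_dcl_right
    (hcomp : ∀ a b c : H, a ≤ b → dcl (m a c) ⊆ dcl (m b c) ∧ dcl (m c a) ⊆ dcl (m c b))
    (X Y : Set H) : hprod m X (dcl Y) ⊆ dcl (hprod m X Y) := by
  intro t ht
  rcases mem_hprod.1 ht with ⟨a, ha, b, ⟨y, hy, hby⟩, h⟩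
  rcases (hcomp b y a hby).2 (subset_dcl _ h) with ⟨u, hu, htu⟩
  exact ⟨u, mem_hprod.2 ⟨a, ha, y, hy, hu⟩, htu⟩

end Aux

theorem stmt7 [PartialOrder H] (m : H → H → Set H)
    (hne : ∀ a b : H, (m a b).Nonempty)
    (hcomp : ∀ a b c : H, a ≤ b →
      dcl (m a c) ⊆ dcl (m b c) ∧ dcl (m c a) ⊆ dcl (m c b))
    (hassoc : ∀ A B C : Set H,
      hprod m (hprod m A B) C = hprod m A (hprod m B C)) :
    (∀ A : Set H, A.Nonempty → A ⊆ dcl (hprod m (hprod m A Set.univ) A)) ↔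
    ((∀ A : Set H, IsRightIdeal m A → dcl (hprod m A A) = A) ∧
     (∀ A : Set H, IsLeftIdeal m A → dcl (hprod m A A) = A) ∧
     (∀ A B : Set H, IsRightIdeal m A → IsLeftIdeal m B →
        IsQuasiIdeal m (dcl (hprod m A B)))) := by
  have dclL : ∀ X Y : Set H, dcl (hprod m (dcl X) Y) ⊆ dcl (hprod m X Y) := fun X Y =>
    (dcl_mono (hprod_dcl_left hcomp X Y)).trans (dcl_dcl _).subset
  have dclR : ∀ X Y : Set H, dcl (hprod m X (dcl Y)) ⊆ dcl (hprod m X Y) := fun X Y =>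
    (dcl_mono (hprod_dcl_right hcomp X Y)).trans (dcl_dcl _).subset
  constructor
  · intro hreg
    refine ⟨?_, ?_, ?_⟩
    · rintro A ⟨hAne, hAr, hAd⟩
      apply Set.Subset.antisymm
      · calc dcl (hprod m A A)
            ⊆ dcl (hprod m A Set.univ) := dcl_mono (hprod_mono subset_rfl (Set.subset_univ _))
          _ ⊆ dcl A := dcl_mono hAr
          _ = A := hAd
      · intro a ha
        exact dcl_mono (hprod_mono hAr subset_rfl) (hreg A hAne ha)
    · rintro A ⟨hAne, hAl, hAd⟩
      apply Set.Subset.antisymm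
      · calc dcl (hprod m A A)
            ⊆ dcl (hprod m Set.univ A) := dcl_mono (hprod_mono (Set.subset_univ _) subset_rfl)
          _ ⊆ dcl A := dcl_mono hAl
          _ = A := hAd
      · intro a ha
        have h := hreg A hAne ha
        rw [hassoc] at h
        exact dcl_mono (hprod_mono subset_rfl hAl) h
    · rintro A B ⟨hAne, hAr, hAd⟩ ⟨hBne, hBl, hBd⟩
      refine ⟨?_, ?_, dcl_dcl _⟩
      · obtain ⟨a, ha⟩ := hAne
        obtain ⟨b, hb⟩ := hBne
        obtain ⟨t, ht⟩ := hne a b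
        exact ⟨t, subset_dcl _ (mem_hprod.2 ⟨a, ha, b, hb, ht⟩)⟩
      · rintro x ⟨hx1, hx2⟩
        have hxA : x ∈ A := by
          have : dcl (hprod m (dcl (hprod m A B)) Set.univ) ⊆ A := by
            calc dcl (hprod m (dcl (hprod m A B)) Set.univ)
                ⊆ dcl (hprod m (hprod m A B) Set.univ) := dclL _ _
              _ = dcl (hprod m A (hprod m B Set.univ)) := by rw [hassoc]
              _ ⊆ dcl (hprod m A Set.univ) := dcl_mono (hprod_mono subset_rfl (Set.subset_univ _))
              _ ⊆ dcl A := dcl_mono hAr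
              _ = A := hAd
          exact this hx1
        have hxB : x ∈ B := by
          have : dcl (hprod m Set.univ (dcl (hprod m A B))) ⊆ B := by
            calc dcl (hprod m Set.univ (dcl (hprod m A B)))
                ⊆ dcl (hprod m Set.univ (hprod m A B)) := dclR _ _
              _ = dcl (hprod m (hprod m Set.univ A) B) := by rw [hassoc]
              _ ⊆ dcl (hprod m Set.univ B) := dcl_mono (hprod_mono (Set.subset_univ _) subset_rfl)
              _ ⊆ dcl B := dcl_mono hBl
              _ = B := hBd
          exact this hx2
        have hx := hreg {x} ⟨x, rfl⟩ rfl
        refine dcl_mono ?_ hx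
        exact hprod_mono
          ((hprod_mono (Set.singleton_subset_iff.2 hxA) subset_rfl).trans hAr)
          (Set.singleton_subset_iff.2 hxB)
  · rintro ⟨h1, h2, h3⟩ A hAne a ha
    suffices hsuff : a ∈ dcl (hprod m (hprod m {a} Set.univ) {a}) by
      exact dcl_mono (hprod_mono
        (hprod_mono (Set.singleton_subset_iff.2 ha) subset_rfl)
        (Set.singleton_subset_iff.2 ha)) hsuff
    set X : Set H := {a} ∪ hprod m {a} Set.univ with hX
    set Y : Set H := {a} ∪ hprod m Set.univ {a} with hY
    set R : Set H := dcl X with hRdef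
    set L : Set H := dcl Y with hLdef
    set S : Set H := hprod m (hprod m {a} Set.univ) {a} with hSdef
    have haR : a ∈ R := subset_dcl _ (Or.inl rfl)
    have haL : a ∈ L := subset_dcl _ (Or.inl rfl)
    have hRright : IsRightIdeal m R := by
      refine ⟨⟨a, haR⟩, ?_, dcl_dcl _⟩
      have step : hprod m X Set.univ ⊆ X := by
        rw [hX, hprod_union_left]
        apply Set.union_subset
        · exact Set.subset_union_right
        · rw [hassoc]
          exact (hprod_mono subset_rfl (Set.subset_univ _)).trans Set.subset_union_right
      calc hprod m R Set.univ
          ⊆ dcl (hprod m X Set.univ) := hprod_dcl_left hcomp _ _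
        _ ⊆ dcl X := dcl_mono step
        _ = R := rfl
    have hLleft : IsLeftIdeal m L := by
      refine ⟨⟨a, haL⟩, ?_, dcl_dcl _⟩
      have step : hprod m Set.univ Y ⊆ Y := by
        rw [hY, hprod_union_right]
        apply Set.union_subset
        · exact Set.subset_union_right
        · rw [← hassoc]
          exact (hprod_mono (Set.subset_univ _) subset_rfl).trans Set.subset_union_right
      calc hprod m Set.univ L
          ⊆ dcl (hprod m Set.univ Y) := hprod_dcl_right hcomp _ _
        _ ⊆ dcl Y := dcl_mono step
        _ = L := rfl
    obtain ⟨hQne, hQq, hQd⟩ := h3 R L hRright hLleft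
    set Q : Set H := dcl (hprod m R L) with hQdef
    -- a ∈ Q
    have haQ : a ∈ Q := by
      have haRR : a ∈ dcl (hprod m R R) := by
        rw [h1 R hRright]; exact haR
      have haLL : a ∈ dcl (hprod m L L) := by
        rw [h2 L hLleft]; exact haL
      -- R ⊆ dcl (L ∪ hprod L univ)
      have hRsub : R ⊆ dcl (L ∪ hprod m L Set.univ) := by
        apply dcl_mono
        apply Set.union_subset
        · exact (Set.singleton_subset_iff.2 haL).trans Set.subset_union_left
        · exact (hprod_mono (Set.singleton_subset_iff.2 haL) subset_rfl).trans
            Set.subset_union_right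
      have hLsub : L ⊆ dcl (R ∪ hprod m Set.univ R) := by
        apply dcl_mono
        apply Set.union_subset
        · exact (Set.singleton_subset_iff.2 haR).trans Set.subset_union_left
        · exact (hprod_mono subset_rfl (Set.singleton_subset_iff.2 haR)).trans
            Set.subset_union_right
      have key1 : dcl (hprod m R R) ⊆ Q ∪ dcl (hprod m Q Set.univ) := by
        calc dcl (hprod m R R)
            ⊆ dcl (hprod m R (dcl (L ∪ hprod m L Set.univ))) :=
              dcl_mono (hprod_mono subset_rfl hRsub)
          _ ⊆ dcl (hprod m R (L ∪ hprod m L Set.univ)) := dclR _ _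
          _ = dcl (hprod m R L ∪ hprod m R (hprod m L Set.univ)) := by
              rw [hprod_union_right]
          _ = dcl (hprod m R L ∪ hprod m (hprod m R L) Set.univ) := by rw [hassoc]
          _ = dcl (hprod m R L) ∪ dcl (hprod m (hprod m R L) Set.univ) := dcl_union _ _
          _ ⊆ Q ∪ dcl (hprod m Q Set.univ) := by
              apply Set.union_subset_union subset_rfl
              exact dcl_mono (hprod_mono (subset_dcl _) subset_rfl)
      have key2 : dcl (hprod m L L) ⊆ Q ∪ dcl (hprod m Set.univ Q) := by
        calc dcl (hprod m L L)
            ⊆ dcl (hprod m (dcl (R ∪ hprod m Set.univ R)) L) :=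
              dcl_mono (hprod_mono hLsub subset_rfl)
          _ ⊆ dcl (hprod m (R ∪ hprod m Set.univ R) L) := dclL _ _
          _ = dcl (hprod m R L ∪ hprod m (hprod m Set.univ R) L) := by
              rw [hprod_union_left]
          _ = dcl (hprod m R L ∪ hprod m Set.univ (hprod m R L)) := by rw [hassoc]
          _ = dcl (hprod m R L) ∪ dcl (hprod m Set.univ (hprod m R L)) := dcl_union _ _
          _ ⊆ Q ∪ dcl (hprod m Set.univ Q) := by
              apply Set.union_subset_union subset_rfl
              exact dcl_mono (hprod_mono subset_rfl (subset_dcl _))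
      rcases key1 haRR with h | hq1
      · exact h
      rcases key2 haLL with h | hq2
      · exact h
      exact hQq ⟨hq1, hq2⟩
    -- Q ⊆ dcl (m a a) ∪ dcl S
    have hQsub : Q ⊆ dcl (m a a) ∪ dcl S := by
      have hXY : hprod m X Y ⊆ m a a ∪ S := by
        rw [hX, hY, hprod_union_left, hprod_union_right, hprod_union_right]
        apply Set.union_subset
        · apply Set.union_subset
          · rw [hprod_singleton]
            exact Set.subset_union_left
          · rw [← hassoc]
            exact Set.subset_union_right
        · apply Set.union_subset
          · exact Set.subset_union_right
          · rw [← hassoc]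
            refine Set.Subset.trans ?_ (Set.subset_union_right)
            rw [hSdef]
            apply hprod_mono _ subset_rfl
            rw [hassoc]
            exact hprod_mono subset_rfl (Set.subset_univ _)
      calc Q ⊆ dcl (dcl (hprod m X Y)) := by
            apply dcl_mono
            exact (hprod_dcl_left hcomp _ _).trans (dcl_mono (hprod_dcl_right hcomp _ _)) |>.trans
              (dcl_dcl _).subset
        _ = dcl (hprod m X Y) := dcl_dcl _
        _ ⊆ dcl (m a a ∪ S) := dcl_mono hXY
        _ = dcl (m a a) ∪ dcl S := dcl_union _ _
    rcases hQsub haQ with hmaa | hS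
    · -- a ≤ t with t ∈ m a a
      obtain ⟨t, ht, hat⟩ := hmaa
      have h1' : a ∈ dcl (m t a) := (hcomp a t a hat).1 ⟨t, ht, hat⟩
      refine dcl_mono ?_ h1'
      intro u hu
      exact mem_hprod.2 ⟨t, mem_hprod.2 ⟨a, rfl, a, Set.mem_univ a, ht⟩, a, rfl, hu⟩
    · exact hS
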